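/- arXiv:2003.02743 — 2 statements merged into one kernel-verified Lean document; each statement's English description precedes it below -/
import Mathlib

section
/- Fix an integer n ≥ 1, reals ω₀, ω₁ with |ω₀ − 1/2| + |ω₁| < 1/2, and an initial outcome x₋₁ ∈ {−1,1}. Define p₀ = ω₀ + ω₁x₋₁, p_∞ = (ω₀ − ω₁)/(1 − 2ω₁), λ_n = (1/n)·(1 − (2ω₁)ⁿ)/(1 − 2ω₁), and K_n = 2(λ_n·p₀ + (1−λ_n)·p_∞) − 1. Then K_n ∈ (−1,1) and the expected logarithmic growth ELG(K) = (1/n) Σ_X P(X) Σ_{k=0}^{n−1} log(1 + K·X_k) attains its unique maximum over K ∈ (−1,1) at K = K_n; i.e., ELG(K) < ELG(K_n) for all K ∈ (−1,1) with K ≠ K_n. -/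
open Finset

/-- The outcome preceding flip `k` in a path `X ∈ {-1,1}ⁿ` with initial outcome `xm1 = x₋₁`. -/
noncomputable def prevOutcome (n : ℕ) (xm1 : ℝ) (X : Fin n → ({-1, 1} : Finset ℝ))
    (k : Fin n) : ℝ :=
  if (k : ℕ) = 0 then xm1
  else (X ⟨(k : ℕ) - 1, Nat.lt_of_le_of_lt (Nat.sub_le _ _) k.isLt⟩ : ℝ)

/-- The probability `P(X) = ∏ₖ rₖ(X)` of a sample path `X ∈ {-1,1}ⁿ` for the
history-cognizant coin with memory depth 1:
`rₖ(X) = ω₀ + ω₁·X_{k-1}` if `X_k = 1` and `1 - (ω₀ + ω₁·X_{k-1})` if `X_k = -1`,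
with `X₋₁ = xm1`. -/
noncomputable def coinPathProb (n : ℕ) (ω0 ω1 xm1 : ℝ)
    (X : Fin n → ({-1, 1} : Finset ℝ)) : ℝ :=
  ∏ k : Fin n,
    if (X k : ℝ) = 1 then ω0 + ω1 * prevOutcome n xm1 X k
    else 1 - (ω0 + ω1 * prevOutcome n xm1 X k)

/-!
Averaged over sample paths, `ELG(K)` sees the coin only through the expected number `A` of heads
among the `n` flips: with `p = A / n` it is the one-bet Kelly growth
`p log (1 + K) + (1 - p) log (1 - K)`, which by Gibbs' inequality is uniquely maximised at
`K = 2p - 1`. The heads probability `q_k` of flip `k` satisfies `q_0 = p₀` and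
`q_{k+1} - p_∞ = 2ω₁ (q_k - p_∞)`, so summing a geometric series gives
`A = n (λ_n p₀ + (1 - λ_n) p_∞)`. The hyperdiamond condition keeps every `q_k` in `(0, 1)`,
hence `0 < A < n` and `K_n ∈ (-1, 1)`.
-/

open Finset Real

local notation "Outcome" => (({-1, 1} : Finset ℝ) : Type)

lemma sum_outcome (f : Outcome → ℝ) : ∑ x, f x = f ⟨1, by simp⟩ + f ⟨-1, by simp⟩ := by
  have huniv : (univ : Finset Outcome) = {⟨1, by simp⟩, ⟨-1, by simp⟩} := by
    ext ⟨x, hx⟩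
    simp [eq_comm, or_comm]
  rw [huniv, sum_pair (by simp [Subtype.ext_iff]; norm_num)]

lemma Fintype.sum_fin_succ_pi {α M : Type*} [Fintype α] [AddCommMonoid M] {n : ℕ}
    (F : (Fin (n + 1) → α) → M) : ∑ Y, F Y = ∑ a, ∑ X : Fin n → α, F (Fin.cons a X) := by
  rw [← (Fin.consEquiv fun _ => α).sum_comp, Fintype.sum_prod_type]
  rfl

/-- The factor `r_k` of `coinPathProb` when `X_{k-1} = x` and `X_k = y`. -/
noncomputable def transitionProb (ω0 ω1 x y : ℝ) : ℝ :=
  if y = 1 then ω0 + ω1 * x else 1 - (ω0 + ω1 * x)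

@[simp] lemma transitionProb_one (ω0 ω1 x : ℝ) : transitionProb ω0 ω1 x 1 = ω0 + ω1 * x :=
  if_pos rfl

@[simp] lemma transitionProb_neg_one (ω0 ω1 x : ℝ) :
    transitionProb ω0 ω1 x (-1) = 1 - (ω0 + ω1 * x) :=
  if_neg (by norm_num)

noncomputable def kellyGrowth (p K : ℝ) : ℝ :=
  p * log (1 + K) + (1 - p) * log (1 - K)

lemma kellyGrowth_lt_kellyGrowth {p K : ℝ} (hp : p ∈ Set.Ioo 0 1) (hK : K ∈ Set.Ioo (-1) 1)
    (hne : K ≠ 2 * p - 1) : kellyGrowth p K < kellyGrowth p (2 * p - 1) := by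
  obtain ⟨hp0, hp1⟩ := hp
  obtain ⟨hK0, hK1⟩ := hK
  have h1p : 0 < 1 - p := sub_pos.2 hp1
  -- Gibbs' inequality: `log t < t - 1` at the likelihood ratios `(1 ± K) / (1 ± (2p - 1))`.
  have hu : log ((1 + K) / (2 * p)) < (1 + K) / (2 * p) - 1 := by
    refine log_lt_sub_one_of_pos (div_pos (by linarith) (by positivity)) ?_
    rw [Ne, div_eq_one_iff_eq (by positivity)]
    contrapose! hne
    linarith
  have hv : log ((1 - K) / (2 * (1 - p))) < (1 - K) / (2 * (1 - p)) - 1 := by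
    refine log_lt_sub_one_of_pos (div_pos (by linarith) (by positivity)) ?_
    rw [Ne, div_eq_one_iff_eq (by positivity)]
    contrapose! hne
    linarith
  have hbalance : p * ((1 + K) / (2 * p) - 1) + (1 - p) * ((1 - K) / (2 * (1 - p)) - 1) = 0 := by
    field_simp
    ring
  rw [log_div (by linarith) (by positivity)] at hu
  rw [log_div (by linarith) (by positivity)] at hv
  rw [kellyGrowth, kellyGrowth, show 1 + (2 * p - 1) = 2 * p by ring,
    show 1 - (2 * p - 1) = 2 * (1 - p) by ring]
  linarith [mul_lt_mul_of_pos_left hu hp0, mul_lt_mul_of_pos_left hv h1p]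

lemma add_mul_mem_Ioo_of_hyperdiamond {ω0 ω1 x : ℝ} (hdiamond : |ω0 - 1/2| + |ω1| < 1/2)
    (hx : |x| ≤ 1) : ω0 + ω1 * x ∈ Set.Ioo 0 1 := by
  have hω1x : |ω1 * x| ≤ |ω1| := by
    rw [abs_mul]
    exact mul_le_of_le_one_right (abs_nonneg _) hx
  have : |ω0 + ω1 * x - 1/2| < 1/2 := by
    calc |ω0 + ω1 * x - 1/2| = |(ω0 - 1/2) + ω1 * x| := by ring_nf
      _ ≤ |ω0 - 1/2| + |ω1 * x| := abs_add_le _ _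
      _ < 1/2 := by linarith
  obtain ⟨h1, h2⟩ := abs_sub_lt_iff.1 this
  constructor <;> linarith

section MemoryOne

variable (ω0 ω1 : ℝ)

lemma coinPathProb_cons {n : ℕ} (x : ℝ) (a : Outcome) (X : Fin n → Outcome) :
    coinPathProb (n + 1) ω0 ω1 x (Fin.cons a X) =
      transitionProb ω0 ω1 x a * coinPathProb n ω0 ω1 a X := by
  rw [coinPathProb, Fin.prod_univ_succ]
  congr 1
  refine Finset.prod_congr rfl fun k _ => ?_
  obtain ⟨_ | j, hk⟩ := k <;> rfl

lemma sum_coinPathProb_mul_succ {n : ℕ} (x : ℝ) (F : (Fin (n + 1) → Outcome) → ℝ) :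
    ∑ Y, coinPathProb (n + 1) ω0 ω1 x Y * F Y =
      ∑ a : Outcome, transitionProb ω0 ω1 x a *
        ∑ X, coinPathProb n ω0 ω1 a X * F (Fin.cons a X) := by
  simp only [Fintype.sum_fin_succ_pi, coinPathProb_cons, mul_assoc, Finset.mul_sum]

lemma sum_coinPathProb (n : ℕ) (x : ℝ) : ∑ X, coinPathProb n ω0 ω1 x X = 1 := by
  induction n generalizing x with
  | zero => simp [coinPathProb]
  | succ n ih =>
    have h := sum_coinPathProb_mul_succ ω0 ω1 x (n := n) fun _ => 1
    simp only [mul_one, ih] at h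
    rw [h, sum_outcome, transitionProb_one, transitionProb_neg_one]
    ring

/-- The probability that flip `k` shows heads when the outcome preceding flip `0` is `x`. -/
noncomputable def headsProb : ℕ → ℝ → ℝ
  | 0, x => ω0 + ω1 * x
  | k + 1, x => (ω0 + ω1 * x) * headsProb k 1 + (1 - (ω0 + ω1 * x)) * headsProb k (-1)

noncomputable def expectedHeads (n : ℕ) (x : ℝ) : ℝ :=
  ∑ k ∈ range n, headsProb ω0 ω1 k x

lemma expectedHeads_succ (n : ℕ) (x : ℝ) :
    expectedHeads ω0 ω1 (n + 1) x =
      (ω0 + ω1 * x) * (1 + expectedHeads ω0 ω1 n 1) +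
        (1 - (ω0 + ω1 * x)) * expectedHeads ω0 ω1 n (-1) := by
  simp only [expectedHeads, sum_range_succ', headsProb, sum_add_distrib, ← mul_sum]
  ring

lemma sum_coinPathProb_mul_sum (g : ℝ → ℝ) (n : ℕ) (x : ℝ) :
    ∑ X, coinPathProb n ω0 ω1 x X * ∑ k, g (X k) =
      expectedHeads ω0 ω1 n x * g 1 + (n - expectedHeads ω0 ω1 n x) * g (-1) := by
  induction n generalizing x with
  | zero => simp [expectedHeads]
  | succ n ih =>
    simp only [sum_coinPathProb_mul_succ, Fin.sum_univ_succ, Fin.cons_zero, Fin.cons_succ,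
      mul_add, sum_add_distrib, ← sum_mul, sum_coinPathProb, one_mul, ih]
    simp only [sum_outcome, expectedHeads_succ, transitionProb_one, transitionProb_neg_one]
    push_cast
    ring

lemma headsProb_mem_Ioo (hdiamond : |ω0 - 1/2| + |ω1| < 1/2) (k : ℕ) {x : ℝ} (hx : |x| ≤ 1) :
    headsProb ω0 ω1 k x ∈ Set.Ioo 0 1 := by
  induction k generalizing x with
  | zero => exact add_mul_mem_Ioo_of_hyperdiamond hdiamond hx
  | succ k ih =>
    obtain ⟨hp0, hp1⟩ := add_mul_mem_Ioo_of_hyperdiamond hdiamond hx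
    obtain ⟨ha0, ha1⟩ := ih (x := 1) (by norm_num)
    obtain ⟨hb0, hb1⟩ := ih (x := -1) (by norm_num)
    constructor <;> simp only [headsProb] <;> nlinarith

lemma expectedHeads_div_mem_Ioo (hdiamond : |ω0 - 1/2| + |ω1| < 1/2) {n : ℕ} (hn : n ≠ 0)
    {x : ℝ} (hx : |x| ≤ 1) : expectedHeads ω0 ω1 n x / n ∈ Set.Ioo 0 1 := by
  have hne : (range n).Nonempty := nonempty_range_iff.2 hn
  have hpos : 0 < expectedHeads ω0 ω1 n x :=
    sum_pos (fun k _ => (headsProb_mem_Ioo ω0 ω1 hdiamond k hx).1) hne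
  have hlt : expectedHeads ω0 ω1 n x < n := by
    simpa [expectedHeads] using
      sum_lt_sum_of_nonempty hne fun k _ => (headsProb_mem_Ioo ω0 ω1 hdiamond k hx).2
  have hn' : (0 : ℝ) < n := by positivity
  exact ⟨div_pos hpos hn', (div_lt_one hn').2 hlt⟩

lemma headsProb_eq (h : 1 - 2 * ω1 ≠ 0) (k : ℕ) (x : ℝ) :
    headsProb ω0 ω1 k x = (ω0 - ω1) / (1 - 2 * ω1)
      + (2 * ω1) ^ k * (ω0 + ω1 * x - (ω0 - ω1) / (1 - 2 * ω1)) := by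
  have hc := div_mul_cancel₀ (ω0 - ω1) h
  set c := (ω0 - ω1) / (1 - 2 * ω1)
  induction k generalizing x with
  | zero => simp [headsProb]
  | succ k ih =>
    rw [headsProb, ih 1, ih (-1)]
    linear_combination (-(2 * ω1) ^ k) * hc

lemma expectedHeads_eq (h : 1 - 2 * ω1 ≠ 0) (n : ℕ) (x : ℝ) :
    expectedHeads ω0 ω1 n x = n * ((ω0 - ω1) / (1 - 2 * ω1))
      + (1 - (2 * ω1) ^ n) / (1 - 2 * ω1) * (ω0 + ω1 * x - (ω0 - ω1) / (1 - 2 * ω1)) := by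
  have hgeom : ∑ k ∈ range n, (2 * ω1) ^ k = (1 - (2 * ω1) ^ n) / (1 - 2 * ω1) := by
    rw [eq_div_iff h]
    linear_combination -(geom_sum_mul (2 * ω1) n)
  rw [expectedHeads, sum_congr rfl fun k _ => headsProb_eq ω0 ω1 h k x, sum_add_distrib,
    ← sum_mul, hgeom, sum_const, card_range, nsmul_eq_mul]

lemma elg_eq_kellyGrowth {n : ℕ} (hn : n ≠ 0) (x K : ℝ) :
    (1 / (n : ℝ)) * ∑ X, coinPathProb n ω0 ω1 x X * ∑ k : Fin n, log (1 + K * (X k : ℝ)) =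
      kellyGrowth (expectedHeads ω0 ω1 n x / n) K := by
  rw [sum_coinPathProb_mul_sum ω0 ω1 (fun t => log (1 + K * t)), kellyGrowth, mul_one,
    mul_neg_one, ← sub_eq_add_neg]
  field_simp

end MemoryOne

/-- Main theorem: for `n` flips of the history-cognizant coin with memory depth `m = 1`,
the expected logarithmic growth is uniquely maximized over `K ∈ (-1,1)` at
`Kₙ = 2(λₙ p₀ + (1-λₙ) p_∞) - 1`. -/
theorem optimal_fraction_memory_one (n : ℕ) (hn : 1 ≤ n) (ω0 ω1 xm1 : ℝ)
    (hdiamond : |ω0 - 1/2| + |ω1| < 1/2)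
    (hx : xm1 = 1 ∨ xm1 = -1)
    (p0 pinf lam Kn : ℝ)
    (hp0 : p0 = ω0 + ω1 * xm1)
    (hpinf : pinf = (ω0 - ω1) / (1 - 2 * ω1))
    (hlam : lam = (1 / (n : ℝ)) * ((1 - (2 * ω1) ^ n) / (1 - 2 * ω1)))
    (hKn : Kn = 2 * (lam * p0 + (1 - lam) * pinf) - 1) :
    Kn ∈ Set.Ioo (-1 : ℝ) 1 ∧
    ∀ K ∈ Set.Ioo (-1 : ℝ) 1, K ≠ Kn →
      (1 / (n : ℝ)) * ∑ X, coinPathProb n ω0 ω1 xm1 X *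
          ∑ k : Fin n, Real.log (1 + K * (X k : ℝ))
        < (1 / (n : ℝ)) * ∑ X, coinPathProb n ω0 ω1 xm1 X *
            ∑ k : Fin n, Real.log (1 + Kn * (X k : ℝ)) := by
  have hn0 : n ≠ 0 := by omega
  have hω1 : 1 - 2 * ω1 ≠ 0 := by
    have := (abs_lt.1 (lt_of_le_of_lt (le_add_of_nonneg_left (abs_nonneg _)) hdiamond)).2
    linarith
  have hxm1 : |xm1| ≤ 1 := by rcases hx with rfl | rfl <;> norm_num
  have hp := expectedHeads_div_mem_Ioo ω0 ω1 hdiamond hn0 hxm1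
  have hKn_eq : Kn = 2 * (expectedHeads ω0 ω1 n xm1 / n) - 1 := by
    rw [hKn, hlam, hp0, hpinf, expectedHeads_eq ω0 ω1 hω1]
    field_simp
    ring
  refine ⟨?_, fun K hK hne => ?_⟩
  · rw [hKn_eq]
    constructor <;> linarith [hp.1, hp.2]
  · rw [elg_eq_kellyGrowth ω0 ω1 hn0, elg_eq_kellyGrowth ω0 ω1 hn0, hKn_eq]
    exact kellyGrowth_lt_kellyGrowth hp hK (hKn_eq ▸ hne)
end

section
/- Let m ≥ 1 and let ω₀, ω₁, …, ω_m be reals with |ω₀ − 1/2| + Σ_{i=1}^m |ω_i| < 1/2. Let (p_k)_{k ≥ −m} be any real sequence with p_{−1},…,p_{−m} ∈ [0,1] satisfying p_k = ω₀ − Σ_{i=1}^m ω_i + 2 Σ_{i=1}^m ω_i·p_{k−i} for all k ≥ 0. Then p_k converges as k → ∞ to p_∞ = (ω₀ − Σ_{i=1}^m ω_i)/(1 − 2 Σ_{i=1}^m ω_i). -/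
/-!
Subtracting the fixed point `q = (ω₀ - Σ ωᵢ)/(1 - 2 Σ ωᵢ)` of the recursion turns it into the
homogeneous recursion `eₖ = Σᵢ 2ωᵢ e_{k-i-1}` for `eₖ = pₖ - q`, whose coefficients have
`ℓ¹`-norm `r = 2 Σ |ωᵢ| < 1` by the hyperdiamond constraint. Each term is then at most `r` times
the largest of the `m` terms before it, so the error shrinks by a factor `r` every `m` steps:
`|eₖ| ≤ M r^(k/m + 1)`, where `M` bounds the initial window.
-/

open Filter Topology

lemma abs_sum_mul_le_sum_abs_mul_of_abs_le {ι : Type*} (s : Finset ι) (c x : ι → ℝ) {B : ℝ}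
    (hx : ∀ i ∈ s, |x i| ≤ B) : |∑ i ∈ s, c i * x i| ≤ (∑ i ∈ s, |c i|) * B :=
  calc |∑ i ∈ s, c i * x i| ≤ ∑ i ∈ s, |c i * x i| := Finset.abs_sum_le_sum_abs _ _
    _ ≤ ∑ i ∈ s, |c i| * B := Finset.sum_le_sum fun i hi => by
        rw [abs_mul]; exact mul_le_mul_of_nonneg_left (hx i hi) (abs_nonneg _)
    _ = (∑ i ∈ s, |c i|) * B := (Finset.sum_mul _ _ _).symm

lemma sub_eq_sum_mul_sub_of_eq_add_sum_mul {ι : Type*} (s : Finset ι) (c x : ι → ℝ)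
    {a y q : ℝ} (hy : y = a + ∑ i ∈ s, c i * x i) (hq : q = a + (∑ i ∈ s, c i) * q) :
    y - q = ∑ i ∈ s, c i * (x i - q) := by
  simp only [mul_sub, Finset.sum_sub_distrib, ← Finset.sum_mul]
  linarith

section LinearRecurrence

variable {m : ℕ} (c : Fin m → ℝ) {e : ℤ → ℝ}
  (hrec : ∀ k : ℤ, 0 ≤ k → e k = ∑ i, c i * e (k - i - 1))
include hrec

lemma abs_le_mul_pow_of_linear_recurrence {M : ℝ} (hM : 0 ≤ M) (hc : ∑ i, |c i| ≤ 1)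
    (hinit : ∀ j : ℤ, -m ≤ j → j < 0 → |e j| ≤ M) (k : ℕ) :
    |e k| ≤ M * (∑ i, |c i|) ^ (k / m + 1) := by
  set r := ∑ i, |c i|
  induction k using Nat.strong_induction_on with
  | _ k ih =>
    have hprev : ∀ i : Fin m, |e (k - i - 1)| ≤ M * r ^ (k / m) := by
      intro i
      have hi := i.isLt
      rcases lt_or_ge ((k : ℤ) - i - 1) 0 with hneg | hnonneg
      · rw [Nat.div_eq_of_lt (by omega), pow_zero, mul_one]
        exact hinit _ (by omega) hneg
      · obtain ⟨j, hj⟩ := Int.eq_ofNat_of_zero_le hnonneg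
        have hdiv : k / m ≤ j / m + 1 := by
          rw [← Nat.add_div_right j (by omega)]
          exact Nat.div_le_div_right (by omega)
        calc |e (k - i - 1)| = |e j| := by rw [hj]
          _ ≤ M * r ^ (j / m + 1) := ih j (by omega)
          _ ≤ M * r ^ (k / m) := mul_le_mul_of_nonneg_left
            (pow_le_pow_of_le_one (Finset.sum_nonneg fun i _ => abs_nonneg _) hc hdiv) hM
    calc |e k| ≤ r * (M * r ^ (k / m)) := by
          rw [hrec k (Int.natCast_nonneg k)]
          exact abs_sum_mul_le_sum_abs_mul_of_abs_le _ _ _ fun i _ => hprev i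
      _ = M * r ^ (k / m + 1) := by ring

lemma tendsto_zero_of_linear_recurrence (hm : 0 < m) (hc : ∑ i, |c i| < 1) :
    Tendsto (fun k : ℕ => e k) atTop (𝓝 0) := by
  set M := ∑ j ∈ Finset.Ico (-(m : ℤ)) 0, |e j|
  have hinit : ∀ j : ℤ, -m ≤ j → j < 0 → |e j| ≤ M := fun j hj₁ hj₂ =>
    Finset.single_le_sum (f := fun j => |e j|) (fun _ _ => abs_nonneg _)
      (Finset.mem_Ico.mpr ⟨hj₁, hj₂⟩)
  have hM : 0 ≤ M := Finset.sum_nonneg fun _ _ => abs_nonneg _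
  have hr : 0 ≤ ∑ i, |c i| := Finset.sum_nonneg fun _ _ => abs_nonneg _
  have hexp : Tendsto (fun k : ℕ => k / m + 1) atTop atTop :=
    (tendsto_add_atTop_nat 1).comp (Nat.tendsto_div_const_atTop hm.ne')
  have hbound : Tendsto (fun k : ℕ => M * (∑ i, |c i|) ^ (k / m + 1)) atTop (𝓝 0) := by
    simpa using ((tendsto_pow_atTop_nhds_zero_of_lt_one hr hc).comp hexp).const_mul M
  refine squeeze_zero_norm (fun k => ?_) hbound
  exact abs_le_mul_pow_of_linear_recurrence c hrec hM hc.le hinit k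

end LinearRecurrence

-- `ω i` is the paper's `ω_{i+1}`.
theorem depth_m_recursion_tendsto_steady_state_general (m : ℕ) (hm : 1 ≤ m)
    (ω0 : ℝ) (ω : Fin m → ℝ)
    (hdiamond : |ω0 - 1/2| + ∑ i, |ω i| < 1/2)
    (p : ℤ → ℝ)
    (hrec : ∀ k : ℤ, 0 ≤ k →
      p k = ω0 - ∑ i, ω i + 2 * ∑ i : Fin m, ω i * p (k - (i : ℤ) - 1)) :
    Filter.Tendsto (fun k : ℕ => p (k : ℤ)) Filter.atTop
      (nhds ((ω0 - ∑ i, ω i) / (1 - 2 * ∑ i, ω i))) := by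
  set q := (ω0 - ∑ i, ω i) / (1 - 2 * ∑ i, ω i)
  have hnorm : ∑ i, |2 * ω i| < 1 := by
    simp only [abs_mul, abs_two, ← Finset.mul_sum]
    linarith [abs_nonneg (ω0 - 1/2)]
  have hden : 1 - 2 * ∑ i, ω i ≠ 0 := ne_of_gt <| by
    linarith [abs_nonneg (ω0 - 1/2),
      (le_abs_self _).trans (Finset.abs_sum_le_sum_abs ω Finset.univ)]
  have hq : q * (1 - 2 * ∑ i, ω i) = ω0 - ∑ i, ω i := div_mul_cancel₀ _ hden
  have hfix : q = ω0 - ∑ i, ω i + (∑ i, 2 * ω i) * q := by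
    rw [← Finset.mul_sum]; linear_combination hq
  have herr : ∀ k : ℤ, 0 ≤ k →
      p k - q = ∑ i : Fin m, 2 * ω i * (p (k - i - 1) - q) := fun k hk =>
    sub_eq_sum_mul_sub_of_eq_add_sum_mul _ _ _
      (by rw [hrec k hk, Finset.mul_sum]; simp only [mul_assoc]) hfix
  simpa using (tendsto_zero_of_linear_recurrence _ herr hm hnorm).add_const q

/-- Under the hyperdiamond constraint, any solution of the depth-`m` recursion
`p_k = ω₀ - Σᵢ ωᵢ + 2 Σᵢ ωᵢ·p_{k-i}` (here `ω i` encodes `ω_{i+1}`, so `p_{k-(i+1)}`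
appears as `p (k - i - 1)`) with initial values `p_{-1},…,p_{-m} ∈ [0,1]` converges to
the steady state `p_∞ = (ω₀ - Σᵢ ωᵢ)/(1 - 2Σᵢ ωᵢ)`. -/
theorem depth_m_recursion_tendsto_steady_state (m : ℕ) (hm : 1 ≤ m)
    (ω0 : ℝ) (ω : Fin m → ℝ)
    (hdiamond : |ω0 - 1/2| + ∑ i, |ω i| < 1/2)
    (p : ℤ → ℝ)
    (hinit : ∀ i : Fin m, p (-(i : ℤ) - 1) ∈ Set.Icc (0 : ℝ) 1)
    (hrec : ∀ k : ℤ, 0 ≤ k →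
      p k = ω0 - ∑ i, ω i + 2 * ∑ i : Fin m, ω i * p (k - (i : ℤ) - 1)) :
    Filter.Tendsto (fun k : ℕ => p (k : ℤ)) Filter.atTop
      (nhds ((ω0 - ∑ i, ω i) / (1 - 2 * ∑ i, ω i))) :=
  depth_m_recursion_tendsto_steady_state_general m hm ω0 ω hdiamond p hrec
end
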